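/- arXiv:math/0612602 — 7 statements merged into one kernel-verified Lean document; each statement's English description precedes it below -/
import Mathlib

section
/- For every non-integer β > 1, the lazy map L_β maps J_β = [0, ⌊β⌋/(β-1)] into itself. -/
open MeasureTheory Set
open scoped Classical

/-- The interval `J_β = [0, ⌊β⌋/(β-1)]`. -/
noncomputable def Jbeta (β : ℝ) : Set ℝ := Set.Icc 0 ((⌊β⌋ : ℝ) / (β - 1))

/-- The greedy digit of `x` in base `β`: equals `j` iff `x ∈ C(j)`, where
`C(j) = [j/β, (j+1)/β)` for `j < ⌊β⌋` and `C(⌊β⌋) = [⌊β⌋/β, ⌊β⌋/(β-1)]`. -/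
noncomputable def gdigit (β x : ℝ) : ℤ := min ⌊β * x⌋ ⌊β⌋

/-- The greedy map `T_β(x) = βx - d` for `x ∈ C(d)`. -/
noncomputable def gmap (β x : ℝ) : ℝ := β * x - gdigit β x

/-- The reflection `ℓ(x) = ⌊β⌋/(β-1) - x`. -/
noncomputable def lref (β x : ℝ) : ℝ := (⌊β⌋ : ℝ) / (β - 1) - x

/-- The lazy digit: the `d` with `x ∈ Δ(d) = ℓ(C(⌊β⌋ - d))`. -/
noncomputable def ldigit (β x : ℝ) : ℤ := ⌊β⌋ - gdigit β (lref β x)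

/-- The lazy map `L_β(x) = βx - d` for `x ∈ Δ(d)`. -/
noncomputable def lmap (β x : ℝ) : ℝ := β * x - ldigit β x

/-- Membership in the union of the switch regions
`S_k = [k/β, ⌊β⌋/(β(β-1)) + (k-1)/β]`, `k = 1, …, ⌊β⌋`. -/
def inSwitch (β x : ℝ) : Prop :=
  ∃ k : ℤ, 1 ≤ k ∧ k ≤ ⌊β⌋ ∧ (k : ℝ) / β ≤ x ∧
    x ≤ (⌊β⌋ : ℝ) / (β * (β - 1)) + ((k : ℝ) - 1) / β

/-- The digit `d_1(ω,x)` assigned by the random map: the greedy digit, unless `x` is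
in a switch region and the first coin is `0` (tails), in which case the lazy digit. -/
noncomputable def rdigit (β : ℝ) (ω : ℕ → Bool) (x : ℝ) : ℤ :=
  if inSwitch β x ∧ ω 0 = false then ldigit β x else gdigit β x

/-- The random β-expansion map `K_β` on `Ω × J_β`, `Ω = {0,1}^ℕ`: the coin sequence is
shifted exactly when `x` lies in a switch region. -/
noncomputable def kmap (β : ℝ) (p : (ℕ → Bool) × ℝ) : (ℕ → Bool) × ℝ :=
  ((if inSwitch β p.2 then (fun n => p.1 (n + 1)) else p.1),
    β * p.2 - rdigit β p.1 p.2)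

/-- The digit `d_{n+1}(ω,x) = d_1(K_β^n(ω,x))` of the random β-expansion. -/
noncomputable def rdig (β : ℝ) (n : ℕ) (ω : ℕ → Bool) (x : ℝ) : ℤ :=
  rdigit β ((kmap β)^[n] (ω, x)).1 ((kmap β)^[n] (ω, x)).2

/- Since `β · ⌊β⌋/(β-1) = ⌊β⌋/(β-1) + ⌊β⌋`, the lazy map is the greedy map conjugated by the
reflection `ℓ`, i.e. `L_β = ℓ ∘ T_β ∘ ℓ`. As `ℓ` maps `J_β` onto itself, it suffices that the
greedy map does: its digit is at most `⌊βx⌋`, and when it is the cap `⌊β⌋` the same identity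
bounds `βx - ⌊β⌋` by `⌊β⌋/(β-1)`. -/

lemma mul_floor_div_sub_one {β : ℝ} (hβ : β ≠ 1) :
    β * ((⌊β⌋ : ℝ) / (β - 1)) = (⌊β⌋ : ℝ) / (β - 1) + ⌊β⌋ := by
  have : β - 1 ≠ 0 := sub_ne_zero.mpr hβ
  field_simp
  ring

lemma one_le_floor_div_sub_one {β : ℝ} (hβ : 1 < β) : 1 ≤ (⌊β⌋ : ℝ) / (β - 1) := by
  rw [one_le_div₀ (sub_pos.mpr hβ)]
  linarith [Int.lt_floor_add_one β]

lemma lref_mem_Jbeta {β x : ℝ} (hx : x ∈ Jbeta β) : lref β x ∈ Jbeta β := by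
  obtain ⟨hx0, hx1⟩ := hx
  constructor <;> simp only [lref] <;> linarith

lemma gmap_nonneg (β x : ℝ) : 0 ≤ gmap β x := by
  have hdigit : (gdigit β x : ℝ) ≤ ⌊β * x⌋ := by exact_mod_cast min_le_left _ _
  unfold gmap
  linarith [Int.floor_le (β * x)]

lemma gmap_le {β x : ℝ} (hβ : 1 < β) (hx : x ≤ (⌊β⌋ : ℝ) / (β - 1)) :
    gmap β x ≤ (⌊β⌋ : ℝ) / (β - 1) := by
  unfold gmap gdigit
  rcases le_total ⌊β * x⌋ ⌊β⌋ with h | h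
  · rw [min_eq_left h]
    linarith [Int.lt_floor_add_one (β * x), one_le_floor_div_sub_one hβ]
  · rw [min_eq_right h]
    have hmul : β * x ≤ β * ((⌊β⌋ : ℝ) / (β - 1)) := by gcongr
    linarith [mul_floor_div_sub_one hβ.ne']

lemma gmap_mem_Jbeta {β x : ℝ} (hβ : 1 < β) (hx : x ∈ Jbeta β) : gmap β x ∈ Jbeta β :=
  ⟨gmap_nonneg β x, gmap_le hβ hx.2⟩

lemma lmap_eq_lref_gmap_lref {β : ℝ} (hβ : β ≠ 1) (x : ℝ) :
    lmap β x = lref β (gmap β (lref β x)) := by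
  simp only [lmap, ldigit, gmap, lref]
  push_cast
  linarith [mul_floor_div_sub_one hβ]

theorem lazy_maps_into_general (β : ℝ) (hβ : 1 < β) :
    ∀ x ∈ Jbeta β, lmap β x ∈ Jbeta β := by
  intro x hx
  rw [lmap_eq_lref_gmap_lref hβ.ne']
  exact lref_mem_Jbeta (gmap_mem_Jbeta hβ (lref_mem_Jbeta hx))

/-- the lazy map `L_β` maps `J_β` into itself. -/
theorem lazy_maps_into (β : ℝ) (hβ : 1 < β) (hni : ¬ ∃ n : ℤ, β = (n : ℝ)) :
    ∀ x ∈ Jbeta β, lmap β x ∈ Jbeta β :=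
  lazy_maps_into_general β hβ
end

section
/- For every x ∈ J_β and every choice of coin flips ω ∈ {0,1}^ℕ, the random digit sequence produced by the random β-expansion map K_β satisfies x = Σ_{i=1}^∞ d_i(ω,x)/β^i. -/
open MeasureTheory Set
open scoped Classical

section Aux

variable {β : ℝ}

lemma one_le_M (hβ : 1 < β) : (1:ℝ) ≤ (⌊β⌋ : ℝ) / (β - 1) := by
  rw [le_div_iff₀ (by linarith : (0:ℝ) < β - 1)]
  have := Int.sub_one_lt_floor β
  linarith

lemma gdigit_nonneg (hβ : 1 < β) {x : ℝ} (hx : 0 ≤ x) : 0 ≤ gdigit β x := by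
  have h1 : (0:ℤ) ≤ ⌊β * x⌋ := Int.floor_nonneg.mpr (by positivity)
  have h2 : (0:ℤ) ≤ ⌊β⌋ := Int.floor_nonneg.mpr (by linarith)
  exact le_min h1 h2

lemma gmap_mem (hβ : 1 < β) {x : ℝ} (hx : x ∈ Set.Icc 0 ((⌊β⌋ : ℝ) / (β - 1))) :
    β * x - (gdigit β x : ℝ) ∈ Set.Icc 0 ((⌊β⌋ : ℝ) / (β - 1)) := by
  obtain ⟨hx0, hxM⟩ := hx
  have hb1 : (0:ℝ) < β - 1 := by linarith
  have hMeq : (β - 1) * ((⌊β⌋ : ℝ) / (β - 1)) = (⌊β⌋ : ℝ) := by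
    field_simp
  constructor
  · have h1 : (gdigit β x : ℝ) ≤ (⌊β * x⌋ : ℝ) := by
      exact_mod_cast min_le_left ⌊β * x⌋ ⌊β⌋
    have h2 : (⌊β * x⌋ : ℝ) ≤ β * x := Int.floor_le _
    linarith
  · rcases le_total ⌊β * x⌋ ⌊β⌋ with h | h
    · have hd : gdigit β x = ⌊β * x⌋ := min_eq_left h
      have h2 : β * x < (⌊β * x⌋ : ℝ) + 1 := Int.lt_floor_add_one _
      have := one_le_M hβ
      rw [hd]; linarith
    · have hd : gdigit β x = ⌊β⌋ := min_eq_right h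
      have hbx : β * x ≤ β * ((⌊β⌋ : ℝ) / (β - 1)) := by
        have : (0:ℝ) < β := by linarith
        exact mul_le_mul_of_nonneg_left hxM this.le
      rw [hd]
      nlinarith [hMeq]

lemma lref_mem (hβ : 1 < β) {x : ℝ} (hx : x ∈ Set.Icc 0 ((⌊β⌋ : ℝ) / (β - 1))) :
    lref β x ∈ Set.Icc 0 ((⌊β⌋ : ℝ) / (β - 1)) := by
  obtain ⟨h0, h1⟩ := hx
  exact ⟨by simp [lref]; linarith, by simp [lref]; linarith⟩

lemma lmap_eq (hβ : 1 < β) (x : ℝ) :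
    β * x - (ldigit β x : ℝ) =
      (⌊β⌋ : ℝ) / (β - 1) - (β * (lref β x) - (gdigit β (lref β x) : ℝ)) := by
  have hb1 : (β - 1) ≠ 0 := by intro h; linarith
  have hMeq : (β - 1) * ((⌊β⌋ : ℝ) / (β - 1)) = (⌊β⌋ : ℝ) := by field_simp
  simp only [ldigit, lref] at *
  push_cast
  nlinarith [hMeq]

lemma rdigit_step (hβ : 1 < β) (ω : ℕ → Bool) {x : ℝ}
    (hx : x ∈ Set.Icc 0 ((⌊β⌋ : ℝ) / (β - 1))) :
    β * x - (rdigit β ω x : ℝ) ∈ Set.Icc 0 ((⌊β⌋ : ℝ) / (β - 1)) := by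
  unfold rdigit
  split_ifs with h
  · rw [lmap_eq hβ]
    have h1 := gmap_mem hβ (lref_mem hβ hx)
    obtain ⟨ha, hb⟩ := h1
    exact ⟨by linarith, by linarith⟩
  · exact gmap_mem hβ hx

lemma rdigit_nonneg (hβ : 1 < β) (ω : ℕ → Bool) {x : ℝ}
    (hx : x ∈ Set.Icc 0 ((⌊β⌋ : ℝ) / (β - 1))) : 0 ≤ rdigit β ω x := by
  unfold rdigit
  split_ifs with h
  · have : gdigit β (lref β x) ≤ ⌊β⌋ := min_le_right _ _
    unfold ldigit; omega
  · exact gdigit_nonneg hβ hx.1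

end Aux

/-- for every coin sequence `ω` and every `x ∈ J_β`, the random digits
generated by `K_β` give an expansion of `x`: `x = ∑_{i=1}^∞ d_i(ω,x)/β^i`. -/
theorem random_expansion (β : ℝ) (hβ : 1 < β) (hni : ¬ ∃ n : ℤ, β = (n : ℝ)) :
    ∀ (ω : ℕ → Bool), ∀ x ∈ Jbeta β,
      x = ∑' i : ℕ, (rdig β i ω x : ℝ) / β ^ (i + 1) := by
  intro ω x hx
  set M : ℝ := (⌊β⌋ : ℝ) / (β - 1) with hM
  have hβ0 : (0:ℝ) < β := by linarith
  -- the orbit stays in Jbeta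
  have horb : ∀ n, ((kmap β)^[n] (ω, x)).2 ∈ Set.Icc 0 M := by
    intro n
    induction n with
    | zero => exact hx
    | succ n ih =>
      rw [Function.iterate_succ_apply']
      exact rdigit_step hβ _ ih
  -- recurrence
  have hrec : ∀ n, ((kmap β)^[n+1] (ω, x)).2
      = β * ((kmap β)^[n] (ω, x)).2 - (rdig β n ω x : ℝ) := by
    intro n
    rw [Function.iterate_succ_apply']
    rfl
  -- partial sums
  have hsum : ∀ n, ∑ i ∈ Finset.range n, (rdig β i ω x : ℝ) / β ^ (i + 1)
      = x - ((kmap β)^[n] (ω, x)).2 / β ^ n := by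
    intro n
    induction n with
    | zero => simp
    | succ n ih =>
      rw [Finset.sum_range_succ, ih, hrec n]
      have hβn : (β : ℝ) ^ n ≠ 0 := by positivity
      have hβn1 : (β : ℝ) ^ (n+1) ≠ 0 := by positivity
      field_simp
      ring
  -- the tail tends to zero
  have htail : Filter.Tendsto (fun n => ((kmap β)^[n] (ω, x)).2 / β ^ n)
      Filter.atTop (nhds 0) := by
    have hup : ∀ n, ((kmap β)^[n] (ω, x)).2 / β ^ n ≤ M / β ^ n := by
      intro n
      gcongr
      exact (horb n).2
    have hlo : ∀ n, 0 ≤ ((kmap β)^[n] (ω, x)).2 / β ^ n := by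
      intro n
      exact div_nonneg (horb n).1 (by positivity)
    have hMten : Filter.Tendsto (fun n : ℕ => M / β ^ n) Filter.atTop (nhds 0) := by
      have := tendsto_pow_atTop_nhds_zero_of_lt_one
        (le_of_lt (by positivity : (0:ℝ) < 1/β)) (by rw [div_lt_one hβ0]; exact hβ)
      have := this.const_mul M
      simpa [div_eq_mul_inv, mul_comm, inv_pow] using this
    exact squeeze_zero hlo hup hMten
  have hten : Filter.Tendsto (fun n => ∑ i ∈ Finset.range n,
      (rdig β i ω x : ℝ) / β ^ (i + 1)) Filter.atTop (nhds x) := by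
    simp only [hsum]
    simpa using (tendsto_const_nhds (x := x)).sub htail
  have hnn : ∀ i, 0 ≤ (rdig β i ω x : ℝ) / β ^ (i + 1) := by
    intro i
    have : (0:ℤ) ≤ rdig β i ω x := rdigit_nonneg hβ _ (horb i)
    have : (0:ℝ) ≤ (rdig β i ω x : ℝ) := by exact_mod_cast this
    positivity
  have := (hasSum_iff_tendsto_nat_of_nonneg hnn x).mpr hten
  exact this.tsum_eq.symm
end

section
/- For the random β-expansion map K_β, if ω <_lex ω' in {0,1}^ℕ, then the digit sequence (d_1(ω,x), d_2(ω,x), ...) is lexicographically less than or equal to (d_1(ω',x), d_2(ω',x), ...), for every x ∈ J_β. -/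
open MeasureTheory Set
open scoped Classical

private lemma ldigit_lt_gdigit {β x : ℝ} (hβ : 1 < β) (hs : inSwitch β x) :
    ldigit β x < gdigit β x := by
  obtain ⟨k, hk1, hk2, hkl, hku⟩ := hs
  have hβ0 : (0:ℝ) < β := by linarith
  have hb1 : (0:ℝ) < β - 1 := by linarith
  have hg : k ≤ gdigit β x := by
    refine le_min (Int.le_floor.2 ?_) hk2
    rw [div_le_iff₀ hβ0] at hkl
    push_cast
    nlinarith
  have hl : ldigit β x ≤ k - 1 := by
    have h1 : ((⌊β⌋ : ℝ) - (k : ℝ) + 1) ≤ β * lref β x := by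
      unfold lref
      have h2 : β * x ≤ (⌊β⌋ : ℝ) / (β - 1) + ((k:ℝ) - 1) := by
        have h3 := mul_le_mul_of_nonneg_left hku hβ0.le
        have h4 : β * ((⌊β⌋ : ℝ) / (β * (β - 1)) + ((k : ℝ) - 1) / β)
            = (⌊β⌋ : ℝ) / (β - 1) + ((k:ℝ) - 1) := by
          field_simp
        linarith [h4 ▸ h3]
      have h5 : β * ((⌊β⌋ : ℝ) / (β - 1)) - (⌊β⌋ : ℝ) / (β - 1) = (⌊β⌋ : ℝ) := by
        field_simp
      nlinarith
    have h6 : (⌊β⌋ - k + 1 : ℤ) ≤ gdigit β (lref β x) := by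
      refine le_min (Int.le_floor.2 ?_) (by omega)
      push_cast
      linarith
    unfold ldigit
    omega
  omega

/-- monotonicity of random digits in the coin sequence: if `ω <_lex ω'`
then the digit sequence of `(ω,x)` is lexicographically ≤ that of `(ω',x)`. -/
theorem digits_lex_mono (β : ℝ) (hβ : 1 < β) (hni : ¬ ∃ n : ℤ, β = (n : ℝ))
    (ω ω' : ℕ → Bool)
    (hlex : ∃ n : ℕ, (∀ i < n, ω i = ω' i) ∧ ω n = false ∧ ω' n = true) :
    ∀ x ∈ Jbeta β,
      (∀ i, rdig β i ω x = rdig β i ω' x) ∨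
        ∃ n : ℕ, (∀ i < n, rdig β i ω x = rdig β i ω' x) ∧
          rdig β n ω x < rdig β n ω' x := by
  obtain ⟨n, hagree, hfn, htn⟩ := hlex
  intro x _
  set A : ℕ → (ℕ → Bool) × ℝ := fun i => (kmap β)^[i] (ω, x) with hAdef
  set B : ℕ → (ℕ → Bool) × ℝ := fun i => (kmap β)^[i] (ω', x) with hBdef
  have hrA : ∀ i, rdig β i ω x = rdigit β (A i).1 (A i).2 := fun i => rfl
  have hrB : ∀ i, rdig β i ω' x = rdigit β (B i).1 (B i).2 := fun i => rfl
  have key : ∀ i, (∀ j < i, rdig β j ω x = rdig β j ω' x) →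
      ∃ m, m ≤ n ∧ (A i).2 = (B i).2 ∧
        (A i).1 = (fun k => ω (k + m)) ∧ (B i).1 = (fun k => ω' (k + m)) := by
    intro i
    induction i with
    | zero => exact fun _ => ⟨0, Nat.zero_le n, rfl, rfl, rfl⟩
    | succ i ih =>
      intro hdig
      obtain ⟨m, hmn, hx2, hA1, hB1⟩ := ih (fun j hj => hdig j (Nat.lt_succ_of_lt hj))
      have hAs : A (i+1) = kmap β (A i) := Function.iterate_succ_apply' _ _ _
      have hBs : B (i+1) = kmap β (B i) := Function.iterate_succ_apply' _ _ _
      by_cases hs : inSwitch β (A i).2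
      · have hsB : inSwitch β (B i).2 := hx2 ▸ hs
        have hmne : m ≠ n := by
          intro hmn'
          have heq := hdig i (Nat.lt_succ_self i)
          rw [hrA, hrB] at heq
          have hdA : rdigit β (A i).1 (A i).2 = ldigit β (A i).2 := by
            unfold rdigit
            rw [if_pos ⟨hs, by rw [hA1]; simpa [hmn'] using hfn⟩]
          have hdB : rdigit β (B i).1 (B i).2 = gdigit β (B i).2 := by
            unfold rdigit
            rw [if_neg]
            rintro ⟨-, hc⟩
            rw [hB1] at hc
            simp [hmn', htn] at hc
          rw [hdA, hdB, hx2] at heq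
          exact absurd heq (ne_of_lt (ldigit_lt_gdigit hβ hsB))
        have hmlt : m < n := lt_of_le_of_ne hmn hmne
        have hcoin : (A i).1 0 = (B i).1 0 := by
          rw [hA1, hB1]; simpa using hagree m hmlt
        have hdeq : rdigit β (A i).1 (A i).2 = rdigit β (B i).1 (B i).2 := by
          unfold rdigit
          rw [hx2, hcoin]
        refine ⟨m + 1, hmlt, ?_, ?_, ?_⟩
        · rw [hAs, hBs]; simp only [kmap]; rw [hdeq, hx2]
        · rw [hAs]; simp only [kmap]; rw [if_pos hs]
          funext k
          rw [hA1]
          show ω (k + 1 + m) = ω (k + (m + 1))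
          congr 1
          omega
        · rw [hBs]; simp only [kmap]; rw [if_pos hsB]
          funext k
          rw [hB1]
          show ω' (k + 1 + m) = ω' (k + (m + 1))
          congr 1
          omega
      · have hsB : ¬ inSwitch β (B i).2 := by rw [← hx2]; exact hs
        have hdeq : rdigit β (A i).1 (A i).2 = rdigit β (B i).1 (B i).2 := by
          unfold rdigit
          rw [if_neg (fun h => hs h.1), if_neg (fun h => hsB h.1), hx2]
        exact ⟨m, hmn, by rw [hAs, hBs]; simp only [kmap]; rw [hdeq, hx2],
          by rw [hAs]; simp only [kmap]; rw [if_neg hs]; exact hA1,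
          by rw [hBs]; simp only [kmap]; rw [if_neg hsB]; exact hB1⟩
  by_cases hall : ∀ i, rdig β i ω x = rdig β i ω' x
  · exact Or.inl hall
  · right
    push_neg at hall
    have hex : ∃ i, rdig β i ω x ≠ rdig β i ω' x := hall
    have hspec : rdig β (Nat.find hex) ω x ≠ rdig β (Nat.find hex) ω' x :=
      Nat.find_spec hex
    have hmin : ∀ j < Nat.find hex, rdig β j ω x = rdig β j ω' x := fun j hj =>
      not_not.1 (Nat.find_min hex hj)
    obtain ⟨m, hmn, hx2, hA1, hB1⟩ := key (Nat.find hex) hmin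
    refine ⟨Nat.find hex, hmin, ?_⟩
    by_cases hs : inSwitch β (A (Nat.find hex)).2
    · have hmn' : m = n := by
        by_contra hne
        have hmlt : m < n := lt_of_le_of_ne hmn hne
        have hcoin : (A (Nat.find hex)).1 0 = (B (Nat.find hex)).1 0 := by
          rw [hA1, hB1]; simpa using hagree m hmlt
        apply hspec
        rw [hrA, hrB]
        unfold rdigit
        rw [hx2, hcoin]
      have hdA : rdigit β (A (Nat.find hex)).1 (A (Nat.find hex)).2
          = ldigit β (A (Nat.find hex)).2 := by
        unfold rdigit
        rw [if_pos ⟨hs, by rw [hA1]; simpa [hmn'] using hfn⟩]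
      have hdB : rdigit β (B (Nat.find hex)).1 (B (Nat.find hex)).2
          = gdigit β (B (Nat.find hex)).2 := by
        unfold rdigit
        rw [if_neg]
        rintro ⟨-, hc⟩
        rw [hB1] at hc
        simp [hmn', htn] at hc
      rw [hrA, hrB, hdA, hdB, hx2]
      exact ldigit_lt_gdigit hβ (hx2 ▸ hs)
    · exfalso
      apply hspec
      have hsB : ¬ inSwitch β (B (Nat.find hex)).2 := by rw [← hx2]; exact hs
      rw [hrA, hrB]
      unfold rdigit
      rw [if_neg (fun h => hs h.1), if_neg (fun h => hsB h.1), hx2]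
end

section
/- For every x ∈ J_β and every expansion x = Σ_{i=1}^∞ a_i/β^i with digits a_i ∈ {0,1,...,⌊β⌋}, there exists ω ∈ {0,1}^ℕ such that a_i = d_i(ω,x) for all i ≥ 1; i.e., every β-expansion of x is generated by the random map K_β for some sequence of coin flips. -/
open MeasureTheory Set
open scoped Classical

/-!
An expansion `x = ∑ aᵢ/β^(i+1)` has tails `yₘ = ∑ a_{m+i}/β^(i+1)` in `J_β` with
`y_{m+1} = β yₘ - aₘ`. Both `βyₘ - aₘ ∈ J_β` and `0 ≤ aₘ ≤ ⌊β⌋` force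
`ldigit yₘ ≤ aₘ ≤ gdigit yₘ`, and for non-integral `β` the greedy and lazy digits differ by at
most one, and only on the switch regions. So each `aₘ` is the greedy or the lazy digit of `yₘ`,
and is the greedy one off the switch regions. The random map reads a fresh coin exactly at the
switch times, so the `k`-th coin can be set to the choice made at the `k`-th switch time.
-/

section Digits

variable {β : ℝ}

lemma ldigit_eq_max_ceil (hβ : 1 < β) (x : ℝ) :
    ldigit β x = max ⌈β * x - (⌊β⌋ : ℝ) / (β - 1)⌉ 0 := by
  have hβ1 : β - 1 ≠ 0 := by linarith
  have hlref : β * lref β x = (⌊β⌋ : ℝ) + ((⌊β⌋ : ℝ) / (β - 1) - β * x) := by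
    rw [lref]; field_simp; ring
  have hceil : ⌈β * x - (⌊β⌋ : ℝ) / (β - 1)⌉ = -⌊(⌊β⌋ : ℝ) / (β - 1) - β * x⌋ := by
    rw [← Int.ceil_neg, neg_sub]
  rw [ldigit, gdigit, hlref, Int.floor_intCast_add, hceil]
  omega

lemma ldigit_nonneg (hβ : 1 < β) (x : ℝ) : 0 ≤ ldigit β x := by
  rw [ldigit_eq_max_ceil hβ]; exact le_max_right _ _

lemma gdigit_le_ldigit_add_one (hβ : 1 < β) (hni : ¬ ∃ n : ℤ, β = (n : ℝ)) (x : ℝ) :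
    gdigit β x ≤ ldigit β x + 1 := by
  rcases le_or_gt ⌊β⌋ 1 with h1 | h2
  · have := ldigit_nonneg hβ x
    exact (min_le_right _ _ : gdigit β x ≤ ⌊β⌋).trans (by omega)
  -- for `⌊β⌋ ≥ 2` the length `⌊β⌋/(β-1)` of `J_β` is less than `2`
  set M : ℝ := (⌊β⌋ : ℝ) / (β - 1) with hM
  have hfl : (⌊β⌋ : ℝ) < β := (Int.floor_le β).lt_of_ne fun h => hni ⟨_, h.symm⟩
  have h2' : (2 : ℝ) ≤ ⌊β⌋ := by exact_mod_cast h2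
  have hM2 : M < 2 := by
    rw [hM, div_lt_iff₀ (by linarith)]; linarith
  have hgap : ⌊β * x⌋ < ⌈β * x - M⌉ + 2 := by
    have := Int.floor_le (β * x)
    have := Int.le_ceil (β * x - M)
    exact_mod_cast (by linarith : (⌊β * x⌋ : ℝ) < ⌈β * x - M⌉ + 2)
  rw [ldigit_eq_max_ceil hβ]
  calc gdigit β x ≤ ⌊β * x⌋ := min_le_left _ _
    _ ≤ max ⌈β * x - M⌉ 0 + 1 := by omega

lemma inSwitch_of_ldigit_lt_gdigit (hβ : 1 < β) {x : ℝ} (h : ldigit β x < gdigit β x) :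
    inSwitch β x := by
  have hβ0 : 0 < β := by linarith
  have hl : ⌈β * x - (⌊β⌋ : ℝ) / (β - 1)⌉ ≤ gdigit β x - 1 := by
    rw [ldigit_eq_max_ceil hβ] at h; omega
  have hl' : β * x - (⌊β⌋ : ℝ) / (β - 1) ≤ (gdigit β x : ℝ) - 1 := by
    exact_mod_cast Int.ceil_le.1 hl
  have hg : (gdigit β x : ℝ) ≤ β * x :=
    (Int.cast_le.2 (min_le_left _ _)).trans (Int.floor_le _)
  have := ldigit_nonneg hβ x
  refine ⟨gdigit β x, by omega, min_le_right _ _, ?_, ?_⟩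
  · rw [div_le_iff₀ hβ0]; linarith
  · have hsplit : (⌊β⌋ : ℝ) / (β - 1) = β * ((⌊β⌋ : ℝ) / (β * (β - 1))) := by
      field_simp
    rw [← sub_le_iff_le_add', le_div_iff₀ hβ0]
    linarith

variable (hβ : 1 < β) {x : ℝ} {d : ℤ} (hd : 0 ≤ d ∧ d ≤ ⌊β⌋) (hx : β * x - d ∈ Jbeta β)
include hβ hd hx

lemma mem_Icc_ldigit_gdigit : d ∈ Icc (ldigit β x) (gdigit β x) :=
  ⟨by rw [ldigit_eq_max_ceil hβ]; exact max_le (Int.ceil_le.2 (by linarith [hx.2])) hd.1,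
    le_min (Int.le_floor.2 (by linarith [hx.1])) hd.2⟩

lemma eq_ldigit_or_eq_gdigit (hni : ¬ ∃ n : ℤ, β = (n : ℝ)) :
    d = ldigit β x ∨ d = gdigit β x := by
  obtain ⟨hl, hg⟩ := mem_Icc_ldigit_gdigit hβ hd hx
  have := gdigit_le_ldigit_add_one hβ hni x
  omega

lemma eq_gdigit_of_not_inSwitch (hs : ¬ inSwitch β x) : d = gdigit β x := by
  obtain ⟨hl, hg⟩ := mem_Icc_ldigit_gdigit hβ hd hx
  have := mt (inSwitch_of_ldigit_lt_gdigit hβ) hs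
  omega

end Digits

section Expansions

variable {β : ℝ} (hβ : 1 < β) {a : ℕ → ℤ}
include hβ

lemma hasSum_div_pow_succ (c : ℝ) : HasSum (fun i : ℕ => c / β ^ (i + 1)) (c / (β - 1)) := by
  have hβ0 : 0 < β := by linarith
  have hgeom := (hasSum_geometric_of_lt_one (by positivity) (inv_lt_one_of_one_lt₀ hβ)).mul_left
    (c / β)
  have hterm : (fun i : ℕ => c / β ^ (i + 1)) = fun i => c / β * β⁻¹ ^ i := by
    funext i; rw [inv_pow, pow_succ']; field_simp
  have hsum : c / (β - 1) = c / β * (1 - β⁻¹)⁻¹ := by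
    have : β - 1 ≠ 0 := by linarith
    field_simp
  rwa [hterm, hsum]

lemma digits_div_pow_le (ha : ∀ i, 0 ≤ a i ∧ a i ≤ ⌊β⌋) (i : ℕ) :
    (a i : ℝ) / β ^ (i + 1) ≤ (⌊β⌋ : ℝ) / β ^ (i + 1) := by
  have : 0 < β ^ (i + 1) := pow_pos (by linarith) _
  gcongr
  exact_mod_cast (ha i).2

lemma digits_div_pow_nonneg (ha : ∀ i, 0 ≤ a i ∧ a i ≤ ⌊β⌋) (i : ℕ) :
    0 ≤ (a i : ℝ) / β ^ (i + 1) := by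
  have : (0 : ℝ) ≤ a i := by exact_mod_cast (ha i).1
  have : 0 < β ^ (i + 1) := pow_pos (by linarith) _
  positivity

lemma summable_digits_div_pow (ha : ∀ i, 0 ≤ a i ∧ a i ≤ ⌊β⌋) :
    Summable fun i : ℕ => (a i : ℝ) / β ^ (i + 1) :=
  (hasSum_div_pow_succ hβ _).summable.of_nonneg_of_le (digits_div_pow_nonneg hβ ha)
    (digits_div_pow_le hβ ha)

lemma tsum_digits_div_pow_mem_Jbeta (ha : ∀ i, 0 ≤ a i ∧ a i ≤ ⌊β⌋) :
    ∑' i : ℕ, (a i : ℝ) / β ^ (i + 1) ∈ Jbeta β :=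
  ⟨tsum_nonneg (digits_div_pow_nonneg hβ ha),
    hasSum_le (digits_div_pow_le hβ ha) (summable_digits_div_pow hβ ha).hasSum
      (hasSum_div_pow_succ hβ _)⟩

lemma mul_tsum_digits_div_pow (ha : ∀ i, 0 ≤ a i ∧ a i ≤ ⌊β⌋) :
    β * ∑' i : ℕ, (a i : ℝ) / β ^ (i + 1) = a 0 + ∑' i : ℕ, (a (i + 1) : ℝ) / β ^ (i + 1) := by
  have hβ0 : β ≠ 0 := by positivity
  have hs : Summable fun i : ℕ => (a i : ℝ) / β ^ i :=
    ((summable_digits_div_pow hβ ha).mul_left β).congr fun i => by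
      rw [pow_succ]; field_simp
  calc β * ∑' i : ℕ, (a i : ℝ) / β ^ (i + 1) = ∑' i : ℕ, (a i : ℝ) / β ^ i := by
        rw [← tsum_mul_left]; exact tsum_congr fun i => by rw [pow_succ]; field_simp
    _ = a 0 + ∑' i : ℕ, (a (i + 1) : ℝ) / β ^ (i + 1) := by
        rw [hs.tsum_eq_zero_add, pow_zero, div_one]

end Expansions

lemma exists_comp_count_eq (P : ℕ → Prop) [DecidablePred P] (c : ℕ → Bool) :
    ∃ ω : ℕ → Bool, ∀ m, P m → ω (Nat.count P m) = c m := by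
  let f : {m // P m} → ℕ := fun m => Nat.count P m
  have hf : f.Injective := fun m n h => Subtype.ext (Nat.count_injective m.2 n.2 h)
  exact ⟨Function.extend f (fun m => c m) fun _ => true, fun m hm => hf.extend_apply _ _ ⟨m, hm⟩⟩

section RandomMap

variable {β : ℝ}

lemma rdigit_eq {ω : ℕ → Bool} {x : ℝ} {d : ℤ} (hd : d = ldigit β x ∨ d = gdigit β x)
    (hg : ¬ inSwitch β x → d = gdigit β x) (hω : inSwitch β x → (ω 0 = false ↔ d = ldigit β x)) :
    rdigit β ω x = d := by
  unfold rdigit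
  split_ifs with h
  · exact ((hω h.1).1 h.2).symm
  by_cases hs : inSwitch β x
  · exact (hd.resolve_left fun hl => h ⟨hs, (hω hs).2 hl⟩).symm
  · exact (hg hs).symm

lemma iterate_kmap_eq {y : ℕ → ℝ} {ω : ℕ → Bool}
    (hy : ∀ m, y (m + 1) = β * y m -
      rdigit β (fun k => ω (k + Nat.count (fun j => inSwitch β (y j)) m)) (y m)) (m : ℕ) :
    (kmap β)^[m] (ω, y 0) = (fun k => ω (k + Nat.count (fun j => inSwitch β (y j)) m), y m) := by
  induction m with
  | zero => rfl
  | succ m ih =>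
    rw [Function.iterate_succ_apply', ih, kmap, hy m, Nat.count_succ]
    congr 1
    split_ifs <;> funext k <;> simp only [add_zero, add_comm 1, add_assoc]

lemma exists_rdig_eq_of_orbit {y : ℕ → ℝ} {a : ℕ → ℤ} (hy : ∀ m, y (m + 1) = β * y m - a m)
    (hd : ∀ m, a m = ldigit β (y m) ∨ a m = gdigit β (y m))
    (hg : ∀ m, ¬ inSwitch β (y m) → a m = gdigit β (y m)) :
    ∃ ω : ℕ → Bool, ∀ m, rdig β m ω (y 0) = a m := by
  obtain ⟨ω, hω⟩ := exists_comp_count_eq (fun j => inSwitch β (y j))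
    fun m => !decide (a m = ldigit β (y m))
  have hr : ∀ m, rdigit β (fun k => ω (k + Nat.count (fun j => inSwitch β (y j)) m)) (y m) = a m :=
    fun m => rdigit_eq (hd m) (hg m) fun hs => by simp [hω m hs]
  have horbit := iterate_kmap_eq fun m => by rw [hr m, hy m]
  exact ⟨ω, fun m => by rw [rdig, horbit m, hr m]⟩

end RandomMap

/-- every β-expansion of `x ∈ J_β` with digits in `{0,…,⌊β⌋}` is produced
by the random map `K_β` for some coin sequence `ω`. -/
theorem all_expansions_attained (β : ℝ) (hβ : 1 < β) (hni : ¬ ∃ n : ℤ, β = (n : ℝ)) :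
    ∀ x ∈ Jbeta β, ∀ a : ℕ → ℤ, (∀ i, 0 ≤ a i ∧ a i ≤ ⌊β⌋) →
      x = ∑' i : ℕ, (a i : ℝ) / β ^ (i + 1) →
      ∃ ω : ℕ → Bool, ∀ i, a i = rdig β i ω x := by
  rintro x - a ha rfl
  set y : ℕ → ℝ := fun m => ∑' i : ℕ, (a (m + i) : ℝ) / β ^ (i + 1) with hy
  have ha' : ∀ m i, 0 ≤ a (m + i) ∧ a (m + i) ≤ ⌊β⌋ := fun m i => ha _
  have hstep : ∀ m, y (m + 1) = β * y m - a m := fun m => by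
    rw [hy, mul_tsum_digits_div_pow hβ (ha' m)]
    simp only [add_zero, add_sub_cancel_left, add_right_comm m 1, add_assoc]
  have hmem : ∀ m, β * y m - a m ∈ Jbeta β := fun m =>
    hstep m ▸ tsum_digits_div_pow_mem_Jbeta hβ (ha' (m + 1))
  obtain ⟨ω, hω⟩ := exists_rdig_eq_of_orbit hstep
    (fun m => eq_ldigit_or_eq_gdigit hβ (ha m) (hmem m) hni)
    (fun m => eq_gdigit_of_not_inSwitch hβ (ha m) (hmem m))
  have hy0 : y 0 = ∑' i : ℕ, (a i : ℝ) / β ^ (i + 1) := by simp only [hy, zero_add]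
  exact ⟨ω, fun i => by rw [← hy0, hω]⟩
end

section
/- A product measure m_p ⊗ μ on Ω × J_β is invariant under the skew product R_β (applying T_β when ω_1 = 1 and L_β when ω_1 = 0, shifting ω) if and only if μ = p·μ∘T_β^{-1} + (1-p)·μ∘L_β^{-1}. -/
open MeasureTheory Set
open scoped Classical

/-- The skew product `R_β(ω,x) = (σω, T_β x)` if `ω_1 = 1`, `(σω, L_β x)` if `ω_1 = 0`. -/
noncomputable def rmap (β : ℝ) (p : (ℕ → Bool) × ℝ) : (ℕ → Bool) × ℝ :=
  ((fun n => p.1 (n + 1)), if p.1 0 = true then gmap β p.2 else lmap β p.2)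

/-! Both sides are determined by their values on rectangles `A ×ˢ B`. Splitting
`R_β⁻¹(A ×ˢ B)` according to the first coin, and using that under a Bernoulli measure the
first coin is independent of the shifted sequence, which is again Bernoulli (compare both on
cylinders, a generating π-system), gives
`(m ⊗ μ)(R_β⁻¹(A ×ˢ B)) = m(A) · (p μ(T_β⁻¹ B) + (1 - p) μ(L_β⁻¹ B))`.
Taking `A = Ω` gives one direction; the other is uniqueness of product measures. -/

open scoped ENNReal

section PointCylinder

variable {α : Type*}

def pointCylinder (s : Finset ℕ) (c : ℕ → α) : Set (ℕ → α) := {ω | ∀ i ∈ s, ω i = c i}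

def pointCylinders : Set (Set (ℕ → α)) := {S | ∃ s c, pointCylinder s c = S}

def shift (ω : ℕ → α) : ℕ → α := fun n => ω (n + 1)

theorem isPiSystem_pointCylinders : IsPiSystem (pointCylinders (α := α)) := by
  rintro _ ⟨s, c, rfl⟩ _ ⟨t, d, rfl⟩ ⟨ω₀, hs, ht⟩
  refine ⟨s ∪ t, ω₀, ?_⟩
  ext ω
  simp only [pointCylinder, mem_ofPred_eq] at hs ht ⊢
  grind

theorem shift_preimage_pointCylinder_inter (s : Finset ℕ) (c : ℕ → α) (a : α) :
    shift ⁻¹' pointCylinder s c ∩ {ω | ω 0 = a} =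
      pointCylinder (insert 0 (s.map (addRightEmbedding 1)))
        (fun n => if n = 0 then a else c (n - 1)) := by
  ext ω
  simp [pointCylinder, shift, and_comm]

variable [MeasurableSpace α]

theorem measurable_shift : Measurable (shift : (ℕ → α) → ℕ → α) :=
  measurable_pi_lambda _ fun n => measurable_pi_apply (n + 1)

variable [MeasurableSingletonClass α]

theorem measurableSet_pointCylinder (s : Finset ℕ) (c : ℕ → α) :
    MeasurableSet (pointCylinder s c) := by
  simp only [pointCylinder, ofPred_forall]
  exact .biInter s.countable_toSet fun i _ => measurable_pi_apply i (measurableSet_singleton _)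

theorem pi_eq_generateFrom_pointCylinders [Countable α] :
    (MeasurableSpace.pi : MeasurableSpace (ℕ → α)) = .generateFrom pointCylinders := by
  refine le_antisymm ?_ (MeasurableSpace.generateFrom_le ?_)
  · refine iSup_le fun i => Measurable.comap_le ?_
    refine @measurable_to_countable' _ _ _ _ (.generateFrom pointCylinders) _ fun a => ?_
    exact MeasurableSpace.measurableSet_generateFrom
      ⟨{i}, fun _ => a, by ext; simp [pointCylinder]⟩
  · rintro _ ⟨s, c, rfl⟩
    exact measurableSet_pointCylinder s c

variable [Countable α] {m : Measure (ℕ → α)} [IsFiniteMeasure m] {w : α → ℝ≥0∞}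

theorem map_shift_restrict_eq (hm : ∀ s c, m (pointCylinder s c) = ∏ i ∈ s, w (c i)) (a : α) :
    (m.restrict {ω | ω 0 = a}).map shift = w a • m := by
  have h₀ : MeasurableSet {ω : ℕ → α | ω 0 = a} :=
    (measurableSet_singleton a).preimage (measurable_pi_apply 0)
  have hm_univ : m univ = 1 := by simpa [pointCylinder] using hm ∅ (fun _ => a)
  refine ext_of_generate_finite _ pi_eq_generateFrom_pointCylinders isPiSystem_pointCylinders ?_ ?_
  · rintro _ ⟨s, c, rfl⟩
    rw [Measure.map_apply measurable_shift (measurableSet_pointCylinder s c),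
      Measure.restrict_apply' h₀, shift_preimage_pointCylinder_inter, hm,
      Finset.prod_insert (by simp), Finset.prod_map, Measure.smul_apply, hm, smul_eq_mul]
    rfl
  · rw [Measure.map_apply measurable_shift .univ, Measure.restrict_apply' h₀, Measure.smul_apply,
      hm_univ]
    simpa [pointCylinder] using hm {0} (fun _ => a)

theorem measure_shift_preimage_inter (hm : ∀ s c, m (pointCylinder s c) = ∏ i ∈ s, w (c i))
    (a : α) {A : Set (ℕ → α)} (hA : MeasurableSet A) :
    m (shift ⁻¹' A ∩ {ω | ω 0 = a}) = w a * m A := by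
  rw [← Measure.restrict_apply (measurable_shift hA), ← Measure.map_apply measurable_shift hA,
    map_shift_restrict_eq hm, Measure.smul_apply, smul_eq_mul]

end PointCylinder

section SkewProduct

variable {X : Type*}

def skewProduct (f g : X → X) (z : (ℕ → Bool) × X) : (ℕ → Bool) × X :=
  (shift z.1, if z.1 0 = true then f z.2 else g z.2)

theorem rmap_eq_skewProduct (β : ℝ) : rmap β = skewProduct (gmap β) (lmap β) := rfl

variable {f g : X → X}

theorem skewProduct_preimage_prod (A : Set (ℕ → Bool)) (B : Set X) :
    skewProduct f g ⁻¹' A ×ˢ B =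
      (shift ⁻¹' A ∩ {ω | ω 0 = true}) ×ˢ (f ⁻¹' B) ∪
        (shift ⁻¹' A ∩ {ω | ω 0 = false}) ×ˢ (g ⁻¹' B) := by
  ext ⟨ω, x⟩
  cases h : ω 0 <;> simp [skewProduct, h]

variable [MeasurableSpace X]

theorem measurable_skewProduct (hf : Measurable f) (hg : Measurable g) :
    Measurable (skewProduct f g) :=
  (measurable_shift.comp measurable_fst).prodMk <|
    .ite ((measurableSet_singleton true).preimage ((measurable_pi_apply 0).comp measurable_fst))
      (hf.comp measurable_snd) (hg.comp measurable_snd)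

theorem prod_skewProduct_preimage_prod {m : Measure (ℕ → Bool)} [IsFiniteMeasure m]
    {w : Bool → ℝ≥0∞} (hm : ∀ s c, m (pointCylinder s c) = ∏ i ∈ s, w (c i))
    (μ : Measure X) [SFinite μ] (hg : Measurable g) {A : Set (ℕ → Bool)} {B : Set X}
    (hA : MeasurableSet A) (hB : MeasurableSet B) :
    m.prod μ (skewProduct f g ⁻¹' A ×ˢ B) =
      m A * (w true * μ (f ⁻¹' B) + w false * μ (g ⁻¹' B)) := by
  have hdisj : Disjoint ((shift ⁻¹' A ∩ {ω | ω 0 = true}) ×ˢ (f ⁻¹' B))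
      ((shift ⁻¹' A ∩ {ω | ω 0 = false}) ×ˢ (g ⁻¹' B)) :=
    Set.disjoint_prod.mpr <| .inl <| Set.disjoint_left.mpr fun ω h h' => by simp_all
  rw [skewProduct_preimage_prod, measure_union hdisj
      (((measurable_shift hA).inter ((measurableSet_singleton false).preimage
        (measurable_pi_apply 0))).prod (hg hB)),
    Measure.prod_prod, Measure.prod_prod, measure_shift_preimage_inter hm true hA,
    measure_shift_preimage_inter hm false hA]
  ring

theorem map_skewProduct_prod_eq_iff (hf : Measurable f) (hg : Measurable g)
    {m : Measure (ℕ → Bool)} [IsFiniteMeasure m] {w : Bool → ℝ≥0∞}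
    (hm : ∀ s c, m (pointCylinder s c) = ∏ i ∈ s, w (c i)) (μ : Measure X) [SigmaFinite μ] :
    (m.prod μ).map (skewProduct f g) = m.prod μ ↔ μ = w true • μ.map f + w false • μ.map g := by
  have hmix {B : Set X} (hB : MeasurableSet B) :
      (w true • μ.map f + w false • μ.map g) B =
        w true * μ (f ⁻¹' B) + w false * μ (g ⁻¹' B) := by
    simp [Measure.map_apply hf hB, Measure.map_apply hg hB]
  have hmap {A : Set (ℕ → Bool)} {B : Set X} (hA : MeasurableSet A) (hB : MeasurableSet B) :
      (m.prod μ).map (skewProduct f g) (A ×ˢ B) =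
        m A * (w true • μ.map f + w false • μ.map g) B := by
    rw [Measure.map_apply (measurable_skewProduct hf hg) (hA.prod hB),
      prod_skewProduct_preimage_prod hm μ hg hA hB, hmix hB]
  constructor
  · intro h
    have hm_univ : m univ = 1 := by simpa [pointCylinder] using hm ∅ (fun _ => true)
    ext B hB
    simpa [h, hm_univ] using hmap .univ hB
  · intro h
    refine (Measure.prod_eq fun A B hA hB => ?_).symm
    rw [hmap hA hB, ← h]

end SkewProduct

theorem measurable_gmap (β : ℝ) : Measurable (gmap β) := by
  unfold gmap gdigit
  fun_prop

theorem measurable_lmap (β : ℝ) : Measurable (lmap β) := by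
  unfold lmap ldigit gdigit lref
  fun_prop

theorem product_invariant_iff_general (β : ℝ) (p : ℝ)
    (m : Measure (ℕ → Bool)) [IsProbabilityMeasure m]
    (hm : ∀ (s : Finset ℕ) (g : ℕ → Bool),
      m {ω | ∀ i ∈ s, ω i = g i} =
        ∏ i ∈ s, (if g i = true then ENNReal.ofReal p else ENNReal.ofReal (1 - p)))
    (μ : Measure ℝ) [IsProbabilityMeasure μ] :
    (m.prod μ).map (rmap β) = m.prod μ ↔
      μ = ENNReal.ofReal p • μ.map (gmap β) +
        ENNReal.ofReal (1 - p) • μ.map (lmap β) := by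
  rw [rmap_eq_skewProduct]
  exact map_skewProduct_prod_eq_iff (measurable_gmap β) (measurable_lmap β)
    (w := fun b => if b = true then ENNReal.ofReal p else ENNReal.ofReal (1 - p)) hm μ

/-- a product measure `m_p ⊗ μ` is invariant under the skew product `R_β`
iff `μ = p·μ∘T_β⁻¹ + (1-p)·μ∘L_β⁻¹`. Here `m` is the Bernoulli(p) measure on
`{0,1}^ℕ`, characterized by its values on cylinder sets, and `μ` is a Borel
probability measure on `J_β`. -/
theorem product_invariant_iff (β : ℝ) (hβ : 1 < β) (hni : ¬ ∃ n : ℤ, β = (n : ℝ))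
    (p : ℝ) (hp0 : 0 < p) (hp1 : p < 1)
    (m : Measure (ℕ → Bool)) [IsProbabilityMeasure m]
    (hm : ∀ (s : Finset ℕ) (g : ℕ → Bool),
      m {ω | ∀ i ∈ s, ω i = g i} =
        ∏ i ∈ s, (if g i = true then ENNReal.ofReal p else ENNReal.ofReal (1 - p)))
    (μ : Measure ℝ) [IsProbabilityMeasure μ] (hμ : μ (Jbeta β)ᶜ = 0) :
    (m.prod μ).map (rmap β) = m.prod μ ↔
      μ = ENNReal.ofReal p • μ.map (gmap β) +
        ENNReal.ofReal (1 - p) • μ.map (lmap β) :=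
  product_invariant_iff_general β p m hm μ
end

section
/- If μ is a probability measure on J_β satisfying μ = p·μ∘T_β^{-1} + (1-p)·μ∘L_β^{-1} and μ is absolutely continuous with respect to Lebesgue measure with a density f that is bounded below by a positive constant c on some nonempty open interval (a,b), then for each n ≥ 1 the density is bounded below by p^n c/β^n Lebesgue-a.e. on T_β^n((a,b)). -/
open MeasureTheory Set
open scoped Classical

/-!
Since `μ ≥ p · (T_β)_* μ`, iterating gives `μ ≥ pⁿ (T_βⁿ)_* μ ≥ pⁿ c (T_βⁿ)_* (λ|(a,b))`.
On each rank-`n` cylinder, `T_βⁿ x = βⁿ x - t` with `t` a digit combination of powers of `β`: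
an affine map of slope `βⁿ`. As there are only countably many cylinders, `(T_βⁿ)_* (λ|(a,b))`
dominates `β⁻ⁿ λ` on `T_βⁿ(a,b)`. Hence `μ ≥ pⁿ c β⁻ⁿ λ` on `T_βⁿ(a,b)`, i.e. `f ≥ pⁿ c β⁻ⁿ` there.
-/

open scoped ENNReal

namespace MeasureTheory

variable {α : Type*} [MeasurableSpace α]

theorem Measure.smul_map_iterate_le {μ : Measure α} {T : α → α} {c : ℝ≥0∞}
    (hT : Measurable T) (h : c • μ.map T ≤ μ) (n : ℕ) : c ^ n • μ.map T^[n] ≤ μ := by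
  induction n with
  | zero => simp
  | succ n ih =>
    calc c ^ (n + 1) • μ.map T^[n + 1] = c • (c ^ n • μ.map T^[n]).map T := by
          rw [Function.iterate_succ', ← Measure.map_map hT (hT.iterate n), Measure.map_smul,
            smul_smul, pow_succ']
      _ ≤ c • μ.map T := by gcongr
      _ ≤ μ := h

theorem Measure.smul_restrict_le_withDensity {μ : Measure α} {s : Set α}
    (hs : MeasurableSet s) {r : ℝ≥0∞} {g : α → ℝ≥0∞} (hg : ∀ x ∈ s, r ≤ g x) :
    r • μ.restrict s ≤ μ.withDensity g :=
  calc r • μ.restrict s = (μ.restrict s).withDensity fun _ => r := (withDensity_const r).symm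
    _ ≤ (μ.restrict s).withDensity g := withDensity_mono (ae_restrict_of_forall_mem hs hg)
    _ = (μ.withDensity g).restrict s := (restrict_withDensity hs g).symm
    _ ≤ μ.withDensity g := Measure.restrict_le_self

theorem ae_le_of_smul_le_withDensity {μ : Measure α} [SigmaFinite μ] {r : ℝ≥0∞}
    {g : α → ℝ≥0∞} (h : r • μ ≤ μ.withDensity g) : ∀ᵐ x ∂μ, r ≤ g x :=
  ae_le_of_forall_setLIntegral_le_of_sigmaFinite₀ aemeasurable_const fun s hs _ => by
    simpa [setLIntegral_const, ← withDensity_apply _ hs, mul_comm] using h s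

theorem ae_restrict_le_of_smul_restrict_le_withDensity {μ : Measure α} [SigmaFinite μ]
    {s : Set α} {r : ℝ≥0∞} {g : α → ℝ≥0∞} (h : r • μ.restrict s ≤ μ.withDensity g) :
    ∀ᵐ x ∂μ.restrict s, r ≤ g x := by
  refine ae_le_of_smul_le_withDensity ?_
  rw [← restrict_withDensity', ← Measure.restrict_restrict_of_subset subset_rfl,
    ← Measure.restrict_smul]
  exact Measure.restrict_mono subset_rfl h

end MeasureTheory

open scoped Pointwise in
theorem Real.volume_image_mul_sub_const {k : ℝ} (hk : 0 < k) (v : ℝ) (W : Set ℝ) :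
    volume ((fun x => k * x - v) '' W) = ENNReal.ofReal k * volume W := by
  have hW : (fun x => k * x - v) '' W = (fun y => y + v) ⁻¹' (k • W) := by
    ext y; simp [Set.mem_smul_set, sub_eq_iff_eq_add]
  rw [hW, measure_preimage_add_right, Measure.addHaar_smul]
  simp [abs_of_pos hk]

theorem Real.volume_restrict_image_le_smul_map {g τ : ℝ → ℝ} {s : Set ℝ} {k : ℝ}
    (hk : 0 < k) (hg : Measurable g) (hτ : Measurable τ) (hτc : (range τ).Countable)
    (hgs : ∀ x ∈ s, g x = k * x - τ x) :
    volume.restrict (g '' s) ≤ ENNReal.ofReal k • (volume.restrict s).map g := by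
  refine Measure.le_iff.2 fun A hA => ?_
  rw [Measure.restrict_apply hA, Measure.smul_apply, Measure.map_apply hg hA, smul_eq_mul,
    Measure.restrict_apply (hg hA)]
  have := hτc.to_subtype
  have hfiber : ∀ v, MeasurableSet (τ ⁻¹' {v}) := fun v => hτ (measurableSet_singleton v)
  set P : ℝ → Set ℝ := fun v => τ ⁻¹' {v} ∩ (g ⁻¹' A ∩ s)
  have hcover : A ∩ g '' s ⊆ ⋃ v : range τ, (fun x => k * x - v) '' P v := by
    rintro _ ⟨hA, x, hx, rfl⟩
    exact mem_iUnion.2 ⟨⟨τ x, x, rfl⟩, x, ⟨rfl, hA, hx⟩, (hgs x hx).symm⟩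
  calc volume (A ∩ g '' s)
      ≤ ∑' v : range τ, volume ((fun x => k * x - v) '' P v) :=
        (measure_mono hcover).trans (measure_iUnion_le _)
    _ = ENNReal.ofReal k *
          ∑' v : range τ, volume.restrict (g ⁻¹' A ∩ s) (τ ⁻¹' {v.1}) := by
        simp_rw [Real.volume_image_mul_sub_const hk, Measure.restrict_apply (hfiber _),
          ENNReal.tsum_mul_left, P]
    _ = ENNReal.ofReal k * volume (g ⁻¹' A ∩ s) := by
        rw [tsum_measure_preimage_singleton hτc fun v _ => hfiber v, preimage_range,
          Measure.restrict_apply MeasurableSet.univ, univ_inter]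

noncomputable def greedyOffset (β : ℝ) : ℕ → ℝ → ℝ
  | 0, _ => 0
  | n + 1, x => β * greedyOffset β n x + gdigit β ((gmap β)^[n] x)

theorem measurable_gdigit (β : ℝ) : Measurable (gdigit β) :=
  (measurable_of_countable (fun q : ℤ => min q ⌊β⌋)).comp (measurable_const_mul β).floor

theorem measurable_greedyOffset (β : ℝ) (n : ℕ) : Measurable (greedyOffset β n) := by
  induction n with
  | zero => exact measurable_const
  | succ n ih =>
    exact (ih.const_mul β).add ((measurable_of_countable _).comp
      ((measurable_gdigit β).comp ((measurable_gmap β).iterate n)))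

theorem countable_range_greedyOffset (β : ℝ) (n : ℕ) :
    (range (greedyOffset β n)).Countable := by
  induction n with
  | zero => exact (countable_singleton 0).mono (range_subset_iff.2 fun _ => rfl)
  | succ n ih =>
    refine (ih.image2 (countable_range ((↑) : ℤ → ℝ)) fun u d => β * u + d).mono ?_
    rintro _ ⟨x, rfl⟩
    exact mem_image2_of_mem (mem_range_self x) (mem_range_self _)

theorem gmap_iterate_eq (β : ℝ) (n : ℕ) (x : ℝ) :
    (gmap β)^[n] x = β ^ n * x - greedyOffset β n x := by
  induction n with
  | zero => simp [greedyOffset]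
  | succ n ih =>
    rw [Function.iterate_succ_apply', gmap, greedyOffset]
    linear_combination β * ih

theorem density_spreads_general (β : ℝ) (hβ : 1 < β)
    (p : ℝ) (hp0 : 0 < p)
    (μ : Measure ℝ)
    (hinv : μ = ENNReal.ofReal p • μ.map (gmap β) +
      ENNReal.ofReal (1 - p) • μ.map (lmap β))
    (f : ℝ → ℝ)
    (hdens : μ = volume.withDensity (fun x => ENNReal.ofReal (f x)))
    (a b c : ℝ) (hc : 0 < c)
    (hlow : ∀ x ∈ Set.Ioo a b, c ≤ f x) :
    ∀ n : ℕ, 1 ≤ n →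
      ∀ᵐ x ∂(volume.restrict ((gmap β)^[n] '' Set.Ioo a b)),
        p ^ n * c / β ^ n ≤ f x := by
  intro n _
  have hβn : 0 < β ^ n := pow_pos (by linarith) n
  have hTn : Measurable (gmap β)^[n] := (measurable_gmap β).iterate n
  have hexpand : volume.restrict ((gmap β)^[n] '' Ioo a b) ≤
      ENNReal.ofReal (β ^ n) • (volume.restrict (Ioo a b)).map (gmap β)^[n] :=
    Real.volume_restrict_image_le_smul_map hβn hTn (measurable_greedyOffset β n)
      (countable_range_greedyOffset β n) fun x _ => gmap_iterate_eq β n x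
  have hbase : ENNReal.ofReal c • volume.restrict (Ioo a b) ≤ μ :=
    hdens ▸ Measure.smul_restrict_le_withDensity measurableSet_Ioo
      fun x hx => ENNReal.ofReal_le_ofReal (hlow x hx)
  have hpull : ENNReal.ofReal p ^ n • μ.map (gmap β)^[n] ≤ μ :=
    Measure.smul_map_iterate_le (measurable_gmap β)
      (le_of_le_of_eq (Measure.le_add_right le_rfl) hinv.symm) n
  have hκ : 0 < p ^ n * c / β ^ n := by positivity
  have hlower :
      ENNReal.ofReal (p ^ n * c / β ^ n) • volume.restrict ((gmap β)^[n] '' Ioo a b) ≤ μ :=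
    calc _ ≤ ENNReal.ofReal (p ^ n * c / β ^ n) •
            ENNReal.ofReal (β ^ n) • (volume.restrict (Ioo a b)).map (gmap β)^[n] := by
          gcongr
      _ = ENNReal.ofReal p ^ n •
            (ENNReal.ofReal c • volume.restrict (Ioo a b)).map (gmap β)^[n] := by
          rw [Measure.map_smul, smul_smul, smul_smul, ← ENNReal.ofReal_mul hκ.le,
            div_mul_cancel₀ _ hβn.ne', ENNReal.ofReal_mul (by positivity),
            ENNReal.ofReal_pow hp0.le]
      _ ≤ ENNReal.ofReal p ^ n • μ.map (gmap β)^[n] := by gcongr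
      _ ≤ μ := hpull
  filter_upwards [ae_restrict_le_of_smul_restrict_le_withDensity (hdens ▸ hlower)] with x hx
  exact (ENNReal.ofReal_le_ofReal_iff'.1 hx).resolve_right hκ.not_ge

/-- if `μ = p·μ∘T_β⁻¹ + (1-p)·μ∘L_β⁻¹` is absolutely continuous with
density `f` bounded below by `c > 0` on a nonempty open interval `(a,b) ⊆ J_β`, then for
each `n ≥ 1` the density is bounded below by `pⁿc/βⁿ` Lebesgue-a.e. on `T_βⁿ((a,b))`. -/
theorem density_spreads (β : ℝ) (hβ : 1 < β) (hni : ¬ ∃ m : ℤ, β = (m : ℝ))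
    (p : ℝ) (hp0 : 0 < p) (hp1 : p < 1)
    (μ : Measure ℝ) [IsProbabilityMeasure μ]
    (hinv : μ = ENNReal.ofReal p • μ.map (gmap β) +
      ENNReal.ofReal (1 - p) • μ.map (lmap β))
    (f : ℝ → ℝ) (hfm : Measurable f)
    (hdens : μ = volume.withDensity (fun x => ENNReal.ofReal (f x)))
    (a b c : ℝ) (hab : a < b) (hsub : Set.Ioo a b ⊆ Jbeta β) (hc : 0 < c)
    (hlow : ∀ x ∈ Set.Ioo a b, c ≤ f x) :
    ∀ n : ℕ, 1 ≤ n →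
      ∀ᵐ x ∂(volume.restrict ((gmap β)^[n] '' Set.Ioo a b)),
        p ^ n * c / β ^ n ≤ f x :=
  density_spreads_general β hβ p hp0 μ hinv f hdens a b c hc hlow
end

section
/- The reflection map ℓ(x) = ⌊β⌋/(β-1) - x is a continuous measurable isomorphism between the greedy system (J_β, μ_β, T_β) and the lazy system (J_β, ρ_β, L_β), where ρ_β = μ_β ∘ ℓ^{-1}; i.e., ℓ is a measure-preserving bijection with ℓ ∘ T_β = L_β ∘ ℓ. -/
open MeasureTheory Set
open scoped Classical

/-- The (unnormalized) Parry density `∑_{n≥0} β^{-n} 1_{[0, T_β^n 1)}(x)`. -/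
noncomputable def parryDensity (β x : ℝ) : ℝ :=
  ∑' n : ℕ, (β ^ n)⁻¹ * Set.indicator (Set.Ico 0 ((gmap β)^[n] 1)) (fun _ => (1 : ℝ)) x

/-- the reflection `ℓ` is a continuous measurable isomorphism between the
greedy system `(J_β, μ_β, T_β)` and the lazy system `(J_β, ρ_β, L_β)`, where `μ_β` is
the Parry measure and `ρ_β = μ_β ∘ ℓ⁻¹`: `ℓ` is a continuous measure-preserving
bijection of `J_β` with `ℓ ∘ T_β = L_β ∘ ℓ` on `J_β`. -/
theorem refl_isomorphism (β : ℝ) (hβ : 1 < β) (hni : ¬ ∃ m : ℤ, β = (m : ℝ))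
    (F : ℝ) (hF : F = ∫ x, parryDensity β x)
    (μ : Measure ℝ)
    (hμ : μ = volume.withDensity (fun x => ENNReal.ofReal (parryDensity β x / F)))
    (ρ : Measure ℝ) (hρ : ρ = μ.map (lref β)) :
    Continuous (lref β) ∧ Set.BijOn (lref β) (Jbeta β) (Jbeta β) ∧
      MeasurePreserving (lref β) μ ρ ∧
      ∀ x ∈ Jbeta β, lref β (gmap β x) = lmap β (lref β x) := by
  have hβ1 : β - 1 ≠ 0 := by linarith
  have hfl : (1:ℝ) ≤ (⌊β⌋ : ℝ) := by exact_mod_cast Int.le_floor.mpr (by exact_mod_cast hβ.le)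
  have hc : (0:ℝ) ≤ (⌊β⌋ : ℝ) / (β - 1) := div_nonneg (by linarith) (by linarith)
  refine ⟨?_, ⟨?_, ?_, ?_⟩, ⟨?_, hρ.symm⟩, ?_⟩
  · exact continuous_const.sub continuous_id
  · intro x hx
    exact ⟨by simp only [lref]; linarith [hx.2], by simp only [lref]; linarith [hx.1]⟩
  · intro x _ y _ h
    simp only [lref] at h; linarith
  · intro y hy
    refine ⟨(⌊β⌋ : ℝ) / (β - 1) - y, ⟨by linarith [hy.2], by linarith [hy.1]⟩, ?_⟩
    simp only [lref]; ring
  · exact measurable_const.sub measurable_id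
  · intro x _
    have hxx : (⌊β⌋ : ℝ) / (β - 1) - ((⌊β⌋ : ℝ) / (β - 1) - x) = x := by ring
    simp only [lmap, ldigit, lref, gmap, hxx]
    push_cast
    field_simp
    ring
end
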